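/- Let r_A and r_B be vectors in ℝ³ with ‖r_A‖ ≤ π and ‖r_B‖ ≤ π, and let R_A = exp(S(r_A)) and R_B = exp(S(r_B)). Then arccos((trace(R_B · R_A) − 1)/2) ≤ ‖r_A + r_B‖, i.e. the angle of the composed rotation R_B R_A is at most ‖r_A − (−r_B)‖. -/

import Mathlib

/-!
Rodrigues' formula and a direct trace computation give `(tr (R_B R_A) - 1) / 2 = 2 w² - 1`, where
`w = cos (a/2) cos (b/2) - sin (a/2) sin (b/2) cos θ` is the scalar part of the product of the unit
quaternions of `R_A` and `R_B` (`a = ‖r_A‖`, `b = ‖r_B‖`, `θ` the angle between `r_A` and `r_B`).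
Since `x ↦ cos √x` is convex on `[0, π²]`, it lies below its chord between `(α - β)²` and
`(α + β)²`; this is `cos ‖x + y‖ ≤ cos ‖x‖ cos ‖y‖ - sin ‖x‖ sin ‖y‖ cos θ` for `‖x‖ + ‖y‖ ≤ π`.
Applied to `r_A / 2` and `r_B / 2` it gives `0 ≤ cos (‖r_A + r_B‖ / 2) ≤ w` when `‖r_A + r_B‖ < π`,
hence `cos ‖r_A + r_B‖ ≤ 2 w² - 1`.
-/

open Real Matrix

/-- The skew-symmetric matrix associated to a vector `r ∈ ℝ³`. -/
noncomputable def skew (r : EuclideanSpace ℝ (Fin 3)) : Matrix (Fin 3) (Fin 3) ℝ :=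
  !![0, -(r 2), r 1;
     r 2, 0, -(r 0);
     -(r 1), r 0, 0]

open Nat Set InnerProductGeometry

section Rodrigues

theorem pow_two_mul_add_one_of_pow_three_eq {R 𝔸 : Type*} [CommSemiring R] [Semiring 𝔸]
    [Algebra R 𝔸] {A : 𝔸} {c : R} (hA : A ^ 3 = c • A) (n : ℕ) :
    A ^ (2 * n + 1) = c ^ n • A := by
  induction n with
  | zero => simp
  | succ n ih =>
    rw [show 2 * (n + 1) + 1 = 2 * n + 1 + 2 by ring, pow_add, ih, smul_mul_assoc,
      (pow_succ' A 2).symm.trans hA, smul_smul, ← pow_succ]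

variable {𝔸 : Type*} [Ring 𝔸] [Algebra ℝ 𝔸] [TopologicalSpace 𝔸] [ContinuousSMul ℝ 𝔸]
  {A : 𝔸} {t : ℝ}

theorem hasSum_exp_odd_of_pow_three_eq (hA : A ^ 3 = -t ^ 2 • A) (ht : t ≠ 0) :
    HasSum (fun n => ((2 * n + 1)! : ℝ)⁻¹ • A ^ (2 * n + 1)) ((sin t / t) • A) := by
  refine ((hasSum_sin t).div_const t).smul_const A |>.congr_fun fun n => ?_
  rw [pow_two_mul_add_one_of_pow_three_eq hA, smul_smul, neg_pow, ← pow_mul, pow_succ]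
  field_simp

theorem hasSum_exp_even_of_pow_three_eq [IsTopologicalRing 𝔸] (hA : A ^ 3 = -t ^ 2 • A)
    (ht : t ≠ 0) :
    HasSum (fun n => ((2 * n)! : ℝ)⁻¹ • A ^ (2 * n)) (1 + ((1 - cos t) / t ^ 2) • A ^ 2) := by
  have hcos : HasSum (fun n => (-1) ^ (n + 1) * t ^ (2 * (n + 1)) / (2 * (n + 1))!)
      (cos t - 1) := by
    simpa using (hasSum_nat_add_iff' 1).mpr (hasSum_cos t)
  refine (hasSum_nat_add_iff' 1).mp ?_
  rw [Finset.sum_range_one, mul_zero, pow_zero, factorial_zero, cast_one, inv_one, one_smul,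
    add_sub_cancel_left, ← neg_sub, neg_div, ← div_neg]
  refine (hcos.div_const (-t ^ 2)).smul_const (A ^ 2) |>.congr_fun fun n => ?_
  rw [show 2 * (n + 1) = 2 * n + 1 + 1 by ring, pow_succ, pow_two_mul_add_one_of_pow_three_eq hA,
    smul_mul_assoc, ← sq, smul_smul, neg_pow, ← pow_mul]
  congr 1
  field_simp
  ring

theorem exp_eq_of_pow_three_eq [IsTopologicalRing 𝔸] [T2Space 𝔸] (hA : A ^ 3 = -t ^ 2 • A)
    (ht : t ≠ 0) :
    NormedSpace.exp A = 1 + (sin t / t) • A + ((1 - cos t) / t ^ 2) • A ^ 2 := by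
  rw [NormedSpace.exp_eq_tsum ℝ, add_right_comm]
  exact (HasSum.even_add_odd (f := fun n => (n ! : ℝ)⁻¹ • A ^ n)
    (hasSum_exp_even_of_pow_three_eq hA ht) (hasSum_exp_odd_of_pow_three_eq hA ht)).tsum_eq

end Rodrigues

theorem cos_eq_two_mul_cos_half_sq_sub_one (x : ℝ) : cos x = 2 * cos (x / 2) ^ 2 - 1 := by
  rw [← cos_two_mul, mul_div_cancel₀ _ two_ne_zero]

theorem sin_eq_two_mul_sin_half_mul_cos_half (x : ℝ) : sin x = 2 * sin (x / 2) * cos (x / 2) := by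
  rw [← sin_two_mul, mul_div_cancel₀ _ two_ne_zero]

theorem EuclideanSpace.norm_sq_eq_fin_three (r : EuclideanSpace ℝ (Fin 3)) :
    ‖r‖ ^ 2 = r 0 ^ 2 + r 1 ^ 2 + r 2 ^ 2 := by
  rw [EuclideanSpace.real_norm_sq_eq, Fin.sum_univ_three]

theorem EuclideanSpace.inner_eq_fin_three (a b : EuclideanSpace ℝ (Fin 3)) :
    inner ℝ a b = a 0 * b 0 + a 1 * b 1 + a 2 * b 2 := by
  simp [PiLp.inner_apply, Fin.sum_univ_three, mul_comm]

theorem skew_zero : skew 0 = 0 := by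
  ext i j
  fin_cases i <;> fin_cases j <;> simp [skew]

theorem skew_pow_three (r : EuclideanSpace ℝ (Fin 3)) : skew r ^ 3 = -‖r‖ ^ 2 • skew r := by
  rw [EuclideanSpace.norm_sq_eq_fin_three]
  ext i j
  fin_cases i <;> fin_cases j <;>
    simp [skew, pow_succ, Matrix.mul_apply, Fin.sum_univ_three] <;> ring

-- At `r = 0` the coefficients are the junk values `0 / 0 = 0`, and both sides are `1`.
theorem exp_skew (r : EuclideanSpace ℝ (Fin 3)) :
    NormedSpace.exp (skew r) =
      1 + (sin ‖r‖ / ‖r‖) • skew r + ((1 - cos ‖r‖) / ‖r‖ ^ 2) • skew r ^ 2 := by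
  rcases eq_or_ne r 0 with rfl | hr
  · simp [skew_zero]
  exact exp_eq_of_pow_three_eq (skew_pow_three r) (norm_ne_zero_iff.mpr hr)

theorem trace_one_add_skew_mul_one_add_skew (a b : EuclideanSpace ℝ (Fin 3)) (p q u v : ℝ) :
    trace ((1 + p • skew b + q • skew b ^ 2) * (1 + u • skew a + v • skew a ^ 2)) =
      3 - 2 * v * ‖a‖ ^ 2 - 2 * q * ‖b‖ ^ 2 - 2 * p * u * inner ℝ a b
        + q * v * (inner ℝ a b ^ 2 + ‖a‖ ^ 2 * ‖b‖ ^ 2) := by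
  rw [EuclideanSpace.norm_sq_eq_fin_three, EuclideanSpace.norm_sq_eq_fin_three,
    EuclideanSpace.inner_eq_fin_three]
  simp [Matrix.trace, Matrix.mul_apply, pow_two, Fin.sum_univ_three, skew]
  ring

theorem trace_exp_skew_mul_exp_skew (a b : EuclideanSpace ℝ (Fin 3)) :
    (trace (NormedSpace.exp (skew b) * NormedSpace.exp (skew a)) - 1) / 2 =
      2 * (cos (‖a‖ / 2) * cos (‖b‖ / 2)
        - sin (‖a‖ / 2) * sin (‖b‖ / 2) * cos (angle a b)) ^ 2 - 1 := by
  rw [exp_skew, exp_skew, trace_one_add_skew_mul_one_add_skew, ← cos_angle_mul_norm_mul_norm]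
  set e := cos (angle a b)
  set A := ‖a‖
  set B := ‖b‖
  have hu : sin A / A * A = sin A := div_mul_cancel_of_imp (by rintro h; simp [h])
  have hp : sin B / B * B = sin B := div_mul_cancel_of_imp (by rintro h; simp [h])
  have hv : (1 - cos A) / A ^ 2 * A ^ 2 = 1 - cos A := div_mul_cancel_of_imp (by simp_all)
  have hq : (1 - cos B) / B ^ 2 * B ^ 2 = 1 - cos B := div_mul_cancel_of_imp (by simp_all)
  set u := sin A / A
  set p := sin B / B
  set v := (1 - cos A) / A ^ 2
  set q := (1 - cos B) / B ^ 2
  have h_full_angle : (3 - 2 * v * A ^ 2 - 2 * q * B ^ 2 - 2 * p * u * (e * (A * B))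
      + q * v * ((e * (A * B)) ^ 2 + A ^ 2 * B ^ 2) - 1) / 2 =
      (cos A + cos B + cos A * cos B - 1) / 2 - sin A * sin B * e
        + (1 - cos A) * (1 - cos B) * e ^ 2 / 2 := by
    linear_combination (-1 + (e ^ 2 + 1) / 2 * (1 - cos B)) * hv
      + (-1 + (e ^ 2 + 1) / 2 * v * A ^ 2) * hq - e * u * A * hp - e * sin B * hu
  rw [h_full_angle, cos_eq_two_mul_cos_half_sq_sub_one A, cos_eq_two_mul_cos_half_sq_sub_one B,
    sin_eq_two_mul_sin_half_mul_cos_half A, sin_eq_two_mul_sin_half_mul_cos_half B]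
  linear_combination (-2 * e ^ 2 * (1 - cos (B / 2) ^ 2)) * sin_sq_add_cos_sq (A / 2)
    + (-2 * e ^ 2 * sin (A / 2) ^ 2) * sin_sq_add_cos_sq (B / 2)

theorem sin_div_le_sin_div_of_le {x y : ℝ} (hx : 0 < x) (hxy : x ≤ y) (hy : y ≤ π) :
    sin y / y ≤ sin x / x := by
  rcases hxy.eq_or_lt with rfl | hxy
  · rfl
  have h := strictConcaveOn_sin_Icc.secant_strict_mono (a := 0) ⟨le_rfl, pi_pos.le⟩
    ⟨hx.le, hxy.le.trans hy⟩ ⟨(hx.trans hxy).le, hy⟩ hx.ne' (hx.trans hxy).ne' hxy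
  simpa using h.le

theorem convexOn_cos_sqrt : ConvexOn ℝ (Icc 0 (π ^ 2)) (fun x => cos √x) := by
  have hderiv : ∀ x ∈ Ioo 0 (π ^ 2), HasDerivAt (fun x => cos √x) (-(sin √x / √x) / 2) x := by
    intro x hx
    convert (hasDerivAt_sqrt hx.1.ne').cos using 1
    field_simp
  refine MonotoneOn.convexOn_of_deriv (convex_Icc _ _) (by fun_prop) ?_ ?_
  · rw [interior_Icc]
    exact fun x hx => (hderiv x hx).differentiableAt.differentiableWithinAt
  · rw [interior_Icc]
    intro x hx y hy hxy
    rw [(hderiv x hx).deriv, (hderiv y hy).deriv]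
    have hyπ : √y ≤ π := by simpa [sqrt_sq pi_pos.le] using sqrt_le_sqrt hy.2.le
    have := sin_div_le_sin_div_of_le (sqrt_pos.2 hx.1) (sqrt_le_sqrt hxy) hyπ
    linarith

theorem cos_sqrt_le {α β e : ℝ} (hα : 0 ≤ α) (hβ : 0 ≤ β) (hαβ : α + β ≤ π) (he : |e| ≤ 1) :
    cos √(α ^ 2 + β ^ 2 + 2 * α * β * e) ≤ cos α * cos β - sin α * sin β * e := by
  obtain ⟨he₁, he₂⟩ := abs_le.1 he
  have hmem : ∀ γ, |γ| ≤ π → γ ^ 2 ∈ Icc 0 (π ^ 2) := fun γ hγ =>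
    ⟨sq_nonneg γ, sq_le_sq' (abs_le.1 hγ).1 (abs_le.1 hγ).2⟩
  have h := convexOn_cos_sqrt.2 (hmem (α - β) (by rw [abs_le]; constructor <;> linarith))
    (hmem (α + β) (by rw [abs_le]; constructor <;> linarith))
    (show 0 ≤ (1 - e) / 2 by linarith) (show 0 ≤ (1 + e) / 2 by linarith) (by ring)
  simp only [smul_eq_mul, sqrt_sq_eq_abs, cos_abs, cos_sub, cos_add] at h
  rw [show α ^ 2 + β ^ 2 + 2 * α * β * e = (1 - e) / 2 * (α - β) ^ 2 + (1 + e) / 2 * (α + β) ^ 2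
    by ring]
  exact h.trans_eq (by ring)

theorem cos_norm_add_le {V : Type*} [NormedAddCommGroup V] [InnerProductSpace ℝ V] {x y : V}
    (h : ‖x‖ + ‖y‖ ≤ π) :
    cos ‖x + y‖ ≤ cos ‖x‖ * cos ‖y‖ - sin ‖x‖ * sin ‖y‖ * cos (angle x y) := by
  have hsq : ‖x + y‖ = √(‖x‖ ^ 2 + ‖y‖ ^ 2 + 2 * ‖x‖ * ‖y‖ * cos (angle x y)) := by
    rw [← sqrt_sq (norm_nonneg (x + y)), norm_add_sq_real, ← cos_angle_mul_norm_mul_norm]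
    ring_nf
  rw [hsq]
  exact cos_sqrt_le (norm_nonneg x) (norm_nonneg y) h (abs_cos_le_one _)

theorem angle_composed_rotation_le_dist
    (rA rB : EuclideanSpace ℝ (Fin 3)) (hA : ‖rA‖ ≤ π) (hB : ‖rB‖ ≤ π) :
    Real.arccos ((Matrix.trace (NormedSpace.exp (skew rB) * NormedSpace.exp (skew rA)) - 1) / 2)
      ≤ ‖rA + rB‖ := by
  rcases le_or_gt π ‖rA + rB‖ with hπ | hπ
  · exact (arccos_le_pi _).trans hπ
  have h_norm (r : EuclideanSpace ℝ (Fin 3)) : ‖(2⁻¹ : ℝ) • r‖ = ‖r‖ / 2 := by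
    simp [norm_smul, inv_mul_eq_div]
  have h_half := cos_norm_add_le (x := (2⁻¹ : ℝ) • rA) (y := (2⁻¹ : ℝ) • rB)
    (by rw [h_norm, h_norm]; linarith)
  rw [← smul_add, angle_smul_smul (by norm_num), h_norm, h_norm, h_norm] at h_half
  have h_nonneg : 0 ≤ cos (‖rA + rB‖ / 2) :=
    cos_nonneg_of_mem_Icc ⟨by linarith [norm_nonneg (rA + rB), pi_pos], by linarith⟩
  rw [trace_exp_skew_mul_exp_skew]
  calc _ ≤ arccos (cos ‖rA + rB‖) := by
        refine arccos_le_arccos ?_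
        rw [cos_eq_two_mul_cos_half_sq_sub_one]
        linarith [pow_le_pow_left₀ h_nonneg h_half 2]
    _ = ‖rA + rB‖ := arccos_cos (norm_nonneg _) hπ.le
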